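/- arXiv:1412.1932 — 4 statements merged into one kernel-verified Lean document; each statement's English description precedes it below -/
import Mathlib

section
/- Let E be a real inner product space, let w ∈ E with w ≠ 0, and let h_*, h^* ∈ ℝ with h_* ≤ h^*. Set K := {z ∈ E : h_* ≤ ⟪w, z⟫ ≤ h^*}. If v ∈ K and u ∈ E satisfy ⟪u, v − z⟫ ≥ 0 for every z ∈ K, then there exists λ ∈ ℝ such that u = λ • w. (Every element of the normal cone to the slab K is a scalar multiple of the weight w.) -/
open scoped RealInnerProductSpace

/-! A normal vector `u` to the slab at `v` pairs nonnegatively with both `p` and `-p` for every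
`p ⟂ w`, since translating `v` along `wᗮ` stays inside the slab. Hence `u ∈ (ℝ ∙ w)ᗮᗮ = ℝ ∙ w`. -/

theorem mem_orthogonal_of_forall_inner_sub_nonneg {E : Type*} [NormedAddCommGroup E]
    [InnerProductSpace ℝ E] {K : Set E} {S : Submodule ℝ E} {u v : E}
    (hS : ∀ p ∈ S, v + p ∈ K) (hu : ∀ z ∈ K, 0 ≤ ⟪u, v - z⟫) : u ∈ Sᗮ := by
  intro p hp
  have hneg := hu _ (hS p hp)
  have hpos := hu _ (hS (-p) (S.neg_mem hp))
  rw [sub_add_cancel_left, inner_neg_right] at hneg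
  rw [sub_add_cancel_left, neg_neg] at hpos
  rw [real_inner_comm]
  linarith

theorem normal_cone_slab_is_multiple_of_weight_general
    {E : Type*} [NormedAddCommGroup E] [InnerProductSpace ℝ E]
    (w : E) (hstar hstar' : ℝ)
    (K : Set E) (hK : K = {z : E | hstar ≤ ⟪w, z⟫ ∧ ⟪w, z⟫ ≤ hstar'})
    (v : E) (hv : v ∈ K) (u : E)
    (hu : ∀ z ∈ K, 0 ≤ ⟪u, v - z⟫) :
    ∃ l : ℝ, u = l • w := by
  subst hK
  have hnormal : u ∈ (ℝ ∙ w)ᗮᗮ := by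
    refine mem_orthogonal_of_forall_inner_sub_nonneg (fun p hp => ?_) hu
    have hwp : ⟪w, p⟫ = 0 := Submodule.mem_orthogonal_singleton_iff_inner_right.mp hp
    simpa only [Set.mem_ofPred_eq, inner_add_right, hwp, add_zero] using hv
  rw [Submodule.orthogonal_orthogonal] at hnormal
  obtain ⟨l, hl⟩ := Submodule.mem_span_singleton.mp hnormal
  exact ⟨l, hl.symm⟩

/-- Every element of the normal cone to the slab
`K = {z | h_* ≤ ⟪w, z⟫ ≤ h^*}` at a point `v ∈ K` is a scalar multiple of `w`. -/
theorem normal_cone_slab_is_multiple_of_weight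
    {E : Type*} [NormedAddCommGroup E] [InnerProductSpace ℝ E]
    (w : E) (hw : w ≠ 0) (hstar hstar' : ℝ) (hle : hstar ≤ hstar')
    (K : Set E) (hK : K = {z : E | hstar ≤ ⟪w, z⟫ ∧ ⟪w, z⟫ ≤ hstar'})
    (v : E) (hv : v ∈ K) (u : E)
    (hu : ∀ z ∈ K, 0 ≤ ⟪u, v - z⟫) :
    ∃ l : ℝ, u = l • w :=
  normal_cone_slab_is_multiple_of_weight_general w hstar hstar' K hK v hv u hu
end

section
/- Let β̂ : ℝ → ℝ be a convex function, let c₀ > 0, and assume the growth condition: for all r, s ∈ ℝ, if s is a subgradient of β̂ at r then |s| ≤ c₀·(1 + β̂(r)). Then for every δ > 0 and every r ∈ ℝ, the Yosida approximation and Moreau–Yosida regularization satisfy the same growth condition with the same constant: |β_δ(r)| ≤ c₀·(1 + β̂_δ(r)), where J_δ(r) is the unique minimizer of s ↦ (r − s)²/(2δ) + β̂(s), β_δ(r) := (r − J_δ(r))/δ and β̂_δ(r) := (r − J_δ(r))²/(2δ) + β̂(J_δ(r)). -/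
/-!
The resolvent `j = J_δ(r)` minimizes the sum of the smooth term `(r - s)² / (2δ)` and the
convex function `β̂`, so minus the derivative of the smooth term at `j`, namely
`(r - j) / δ = β_δ(r)`, is a subgradient of `β̂` at `j`. The growth condition then gives
`|β_δ(r)| ≤ c₀ (1 + β̂(j))`, and `β̂(j) ≤ β̂_δ(r)` because the quadratic term is nonnegative.
-/

open Filter Set Topology

theorem ConvexOn.sub_le_of_isMinOn_add {E : Type*} [NormedAddCommGroup E] [NormedSpace ℝ E]
    {s : Set E} {g q : E → ℝ} {q' : E →L[ℝ] ℝ} {j t : E} (hg : ConvexOn ℝ s g)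
    (hmin : IsMinOn (fun x ↦ q x + g x) s j) (hq : HasFDerivAt q q' j) (hj : j ∈ s)
    (ht : t ∈ s) : g j - q' (t - j) ≤ g t := by
  have hline : HasDerivAt (fun l : ℝ ↦ q (j + l • (t - j))) (q' (t - j)) 0 := by
    have h := ((hasDerivAt_id (0 : ℝ)).smul_const (t - j)).const_add j
    rw [one_smul] at h
    exact hq.comp_hasDerivAt_of_eq (0 : ℝ) h (by simp)
  -- Comparing `j` with `(1 - l) • j + l • t` bounds the difference quotients of `q` from below.
  have hslope : ∀ l ∈ Ioc (0 : ℝ) 1,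
      g j - g t ≤ l⁻¹ * (q (j + l • (t - j)) - q j) := by
    rintro l ⟨hl0, hl1⟩
    have hx : j + l • (t - j) = (1 - l) • j + l • t := by
      rw [smul_sub, sub_smul, one_smul]; abel
    have hconv := hg.2 hj ht (sub_nonneg.2 hl1) hl0.le (sub_add_cancel 1 l)
    have hle := hmin (hg.1 hj ht (sub_nonneg.2 hl1) hl0.le (sub_add_cancel 1 l))
    simp only [mem_ofPred_eq, smul_eq_mul] at hle hconv
    rw [hx, le_inv_mul_iff₀ hl0]
    linarith
  have hderiv : g j - g t ≤ q' (t - j) := ge_of_tendsto hline.tendsto_slope_zero_right <|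
    mem_of_superset (Ioc_mem_nhdsGT one_pos) fun l hl ↦ by
      simp only [zero_add, zero_smul, add_zero, smul_eq_mul]
      exact hslope l hl
  linarith

theorem hasDerivAt_sub_sq_div (r c j : ℝ) :
    HasDerivAt (fun s ↦ (r - s) ^ 2 / c) (-(2 * (r - j) / c)) j := by
  refine ((((hasDerivAt_id' j).const_sub r).fun_pow 2).div_const c).congr_deriv ?_
  norm_num
  ring

theorem ConvexOn.yosida_isSubgradient {B : ℝ → ℝ} (hB : ConvexOn ℝ univ B) {δ r j : ℝ}
    (hj : ∀ s, (r - j) ^ 2 / (2 * δ) + B j ≤ (r - s) ^ 2 / (2 * δ) + B s) (t : ℝ) :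
    B j + (r - j) / δ * (t - j) ≤ B t := by
  have h := hB.sub_le_of_isMinOn_add (q := fun s ↦ (r - s) ^ 2 / (2 * δ)) (fun s _ ↦ hj s)
    (hasDerivAt_sub_sq_div r (2 * δ) j).hasFDerivAt (mem_univ j) (mem_univ t)
  rw [mul_div_mul_left _ _ two_ne_zero] at h
  simpa [mul_comm, sub_eq_add_neg] using h

/-- If every subgradient `s` of the convex function `β̂` at `r` satisfies the
growth condition `|s| ≤ c₀(1 + β̂(r))`, then the Yosida approximation and the
Moreau–Yosida regularization satisfy `|β_δ(r)| ≤ c₀(1 + β̂_δ(r))` with the same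
constant. -/
theorem yosida_growth_condition
    (B : ℝ → ℝ) (hB : ConvexOn ℝ Set.univ B) (c₀ : ℝ) (hc₀ : 0 < c₀)
    (hgrowth : ∀ r s : ℝ, (∀ t : ℝ, B r + s * (t - r) ≤ B t) → |s| ≤ c₀ * (1 + B r))
    (δ : ℝ) (hδ : 0 < δ) (r j : ℝ)
    (hj : ∀ s : ℝ, (r - j) ^ 2 / (2 * δ) + B j ≤ (r - s) ^ 2 / (2 * δ) + B s) :
    |(r - j) / δ| ≤ c₀ * (1 + ((r - j) ^ 2 / (2 * δ) + B j)) := by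
  have hquad : 0 ≤ (r - j) ^ 2 / (2 * δ) := by positivity
  calc |(r - j) / δ| ≤ c₀ * (1 + B j) := hgrowth j _ (hB.yosida_isSubgradient hj)
    _ ≤ c₀ * (1 + ((r - j) ^ 2 / (2 * δ) + B j)) := by gcongr; linarith
end

section
/- Let β̂, β̂_Γ : ℝ → ℝ be convex functions with β̂ ≥ 0, β̂_Γ ≥ 0 and β̂(0) = β̂_Γ(0) = 0, and let ϱ > 0 and c₀ > 0. Assume the domination condition: for every r ∈ ℝ and every subgradient s_Γ of β̂_Γ at r, there exists a subgradient s of β̂ at r with |s| ≤ ϱ·|s_Γ| + c₀ (i.e. |β°(r)| ≤ ϱ·|β_Γ°(r)| + c₀ in terms of minimal sections). For ε > 0 define β_ε(r) := (r − J_ε(r))/ε, where J_ε(r) is the unique minimizer of s ↦ (r − s)²/(2ε) + β̂(s), and define β_{Γ,ε}(r) := (r − J_{Γ,ε}(r))/(εϱ), where J_{Γ,ε}(r) is the unique minimizer of s ↦ (r − s)²/(2εϱ) + β̂_Γ(s). Then for every ε > 0 and every r ∈ ℝ one has |β_ε(r)| ≤ ϱ·|β_{Γ,ε}(r)| + c₀.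 -/
/-!
The Yosida slope `(r - J r)/δ` is a subgradient of the convex function at the resolvent point
`J r`. With `p := β_ε(r) ∈ ∂β̂(J_ε r)` and `q := β_{Γ,ε}(r) ∈ ∂β̂_Γ(J_{Γ,ε} r)`, the domination
hypothesis gives `s ∈ ∂β̂(J_{Γ,ε} r)` with `|s| ≤ ϱ|q| + c₀`. Since
`J_ε r - J_{Γ,ε} r = ε (ϱ q - p)`, monotonicity of `∂β̂` says that `p` lies between `s` and
`ϱ q`, hence `|p| ≤ max |s| (ϱ|q|) ≤ ϱ|q| + c₀`.
-/

open Filter Set Topology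

def IsSubgradient (f : ℝ → ℝ) (x s : ℝ) : Prop :=
  ∀ t : ℝ, f x + s * (t - x) ≤ f t

theorem IsSubgradient.mul_sub_nonneg {f : ℝ → ℝ} {x y p q : ℝ}
    (hp : IsSubgradient f x p) (hq : IsSubgradient f y q) : 0 ≤ (p - q) * (x - y) := by
  have hxy := hp y
  have hyx := hq x
  linarith

/-- Comparing the minimum with its value at `x + θ (t - x)` gives the subgradient inequality
up to an error `θ (t - x)² / (2δ)`, which vanishes as `θ → 0⁺`. -/
theorem ConvexOn.isSubgradient_of_isMinimizer_resolvent {f : ℝ → ℝ}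
    (hf : ConvexOn ℝ univ f) {δ : ℝ} (hδ : 0 < δ) {r x : ℝ}
    (hx : ∀ s : ℝ, (r - x) ^ 2 / (2 * δ) + f x ≤ (r - s) ^ 2 / (2 * δ) + f s) :
    IsSubgradient f x ((r - x) / δ) := by
  intro t
  set K := (t - x) ^ 2 / (2 * δ)
  have h_err : ∀ θ ∈ Ioc (0 : ℝ) 1, f x + (r - x) / δ * (t - x) - f t ≤ θ * K := by
    rintro θ ⟨hθ0, hθ1⟩
    have h_conv := hf.2 (mem_univ x) (mem_univ t) (sub_nonneg.2 hθ1) hθ0.le (by ring)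
    have h_min := hx ((1 - θ) * x + θ * t)
    have h_sq : (r - ((1 - θ) * x + θ * t)) ^ 2 / (2 * δ)
        = (r - x) ^ 2 / (2 * δ) - θ * ((r - x) / δ * (t - x)) + θ ^ 2 * K := by
      simp only [K]; field_simp; ring
    simp only [smul_eq_mul] at h_conv
    rw [h_sq] at h_min
    have h_scaled : θ * (f x + (r - x) / δ * (t - x) - f t) ≤ θ * (θ * K) := by nlinarith
    exact le_of_mul_le_mul_left h_scaled hθ0
  have h_lim : Tendsto (fun θ : ℝ => θ * K) (𝓝[>] 0) (𝓝 0) := by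
    exact ((continuous_mul_const K).tendsto' 0 0 (zero_mul K)).mono_left nhdsWithin_le_nhds
  have := ge_of_tendsto h_lim (eventually_of_mem (Ioc_mem_nhdsGT one_pos) h_err)
  linarith

theorem abs_le_max_abs_abs_of_mul_sub_nonneg {p s m : ℝ} (h : 0 ≤ (p - s) * (m - p)) :
    |p| ≤ max |s| |m| := by
  rcases mul_nonneg_iff.1 h with ⟨hsp, hpm⟩ | ⟨hsp, hpm⟩
  · exact abs_le_max_abs_abs (sub_nonneg.1 hsp) (sub_nonneg.1 hpm)
  · rw [max_comm]
    exact abs_le_max_abs_abs (sub_nonpos.1 hpm) (sub_nonpos.1 hsp)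

theorem yosida_domination_general
    (B BΓ : ℝ → ℝ) (hB : ConvexOn ℝ Set.univ B) (hBΓ : ConvexOn ℝ Set.univ BΓ)
    (ϱ c₀ : ℝ) (hϱ : 0 < ϱ) (hc₀ : 0 < c₀)
    (hdom : ∀ r sΓ : ℝ, (∀ t : ℝ, BΓ r + sΓ * (t - r) ≤ BΓ t) →
      ∃ s : ℝ, (∀ t : ℝ, B r + s * (t - r) ≤ B t) ∧ |s| ≤ ϱ * |sΓ| + c₀)
    (ε : ℝ) (hε : 0 < ε)
    (J JΓ : ℝ → ℝ)
    (hJ : ∀ r s : ℝ, (r - J r) ^ 2 / (2 * ε) + B (J r) ≤ (r - s) ^ 2 / (2 * ε) + B s)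
    (hJΓ : ∀ r s : ℝ,
      (r - JΓ r) ^ 2 / (2 * (ε * ϱ)) + BΓ (JΓ r) ≤ (r - s) ^ 2 / (2 * (ε * ϱ)) + BΓ s) :
    ∀ r : ℝ, |(r - J r) / ε| ≤ ϱ * |(r - JΓ r) / (ε * ϱ)| + c₀ := by
  intro r
  set p := (r - J r) / ε
  set q := (r - JΓ r) / (ε * ϱ)
  have hp : IsSubgradient B (J r) p := hB.isSubgradient_of_isMinimizer_resolvent hε (hJ r)
  have hq : IsSubgradient BΓ (JΓ r) q :=
    hBΓ.isSubgradient_of_isMinimizer_resolvent (mul_pos hε hϱ) (hJΓ r)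
  obtain ⟨s, hs, hs_le⟩ := hdom _ _ hq
  have h_gap : J r - JΓ r = ε * (ϱ * q - p) := by
    simp only [p, q]; field_simp; ring
  have h_between : 0 ≤ (p - s) * (ϱ * q - p) := by
    have h_mono := hp.mul_sub_nonneg hs
    rw [h_gap, mul_left_comm] at h_mono
    exact nonneg_of_mul_nonneg_right h_mono hε
  calc |p| ≤ max |s| |ϱ * q| := abs_le_max_abs_abs_of_mul_sub_nonneg h_between
    _ ≤ ϱ * |q| + c₀ := by
      rw [abs_mul, abs_of_pos hϱ]
      exact max_le hs_le (by linarith)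

/-- If `|β°(r)| ≤ ϱ|β_Γ°(r)| + c₀` (in the sense of subgradients), then the same
domination holds for the Yosida approximations `β_ε` (parameter `ε`) and
`β_{Γ,ε}` (parameter `εϱ`): `|β_ε(r)| ≤ ϱ|β_{Γ,ε}(r)| + c₀`. -/
theorem yosida_domination
    (B BΓ : ℝ → ℝ) (hB : ConvexOn ℝ Set.univ B) (hBΓ : ConvexOn ℝ Set.univ BΓ)
    (hBnonneg : ∀ t : ℝ, 0 ≤ B t) (hBΓnonneg : ∀ t : ℝ, 0 ≤ BΓ t)
    (hB0 : B 0 = 0) (hBΓ0 : BΓ 0 = 0)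
    (ϱ c₀ : ℝ) (hϱ : 0 < ϱ) (hc₀ : 0 < c₀)
    (hdom : ∀ r sΓ : ℝ, (∀ t : ℝ, BΓ r + sΓ * (t - r) ≤ BΓ t) →
      ∃ s : ℝ, (∀ t : ℝ, B r + s * (t - r) ≤ B t) ∧ |s| ≤ ϱ * |sΓ| + c₀)
    (ε : ℝ) (hε : 0 < ε)
    (J JΓ : ℝ → ℝ)
    (hJ : ∀ r s : ℝ, (r - J r) ^ 2 / (2 * ε) + B (J r) ≤ (r - s) ^ 2 / (2 * ε) + B s)
    (hJΓ : ∀ r s : ℝ,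
      (r - JΓ r) ^ 2 / (2 * (ε * ϱ)) + BΓ (JΓ r) ≤ (r - s) ^ 2 / (2 * (ε * ϱ)) + BΓ s) :
    ∀ r : ℝ, |(r - J r) / ε| ≤ ϱ * |(r - JΓ r) / (ε * ϱ)| + c₀ :=
  yosida_domination_general B BΓ hB hBΓ ϱ c₀ hϱ hc₀ hdom ε hε J JΓ hJ hJΓ
end

section
/- Let β̂, β̂_Γ : ℝ → ℝ be convex functions with β̂ ≥ 0, β̂_Γ ≥ 0 and β̂(0) = β̂_Γ(0) = 0, let ϱ > 0, c₀ > 0 and ε > 0. Define β_ε(r) := (r − J_ε(r))/ε, where J_ε(r) is the unique minimizer of s ↦ (r − s)²/(2ε) + β̂(s), and β_{Γ,ε}(r) := (r − J_{Γ,ε}(r))/(εϱ), where J_{Γ,ε}(r) is the unique minimizer of s ↦ (r − s)²/(2εϱ) + β̂_Γ(s). If |β_ε(r)| ≤ ϱ·|β_{Γ,ε}(r)| + c₀ for all r ∈ ℝ, then for every r ∈ ℝ one has the lower bound β_{Γ,ε}(r)·β_ε(r) = |β_{Γ,ε}(r)|·|β_ε(r)| ≥ (1/(2ϱ))·β_ε(r)²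 − c₀²/(2ϱ). -/
lemma yosida_sign_aux (B : ℝ → ℝ) (hconv : ConvexOn ℝ Set.univ B)
    (hn : ∀ t : ℝ, 0 ≤ B t) (h0 : B 0 = 0) (δ : ℝ) (hδ : 0 < δ) (J : ℝ → ℝ)
    (hJ : ∀ r s : ℝ, (r - J r) ^ 2 / (2 * δ) + B (J r) ≤ (r - s) ^ 2 / (2 * δ) + B s) :
    ∀ r : ℝ, (0 ≤ r → 0 ≤ r - J r) ∧ (r ≤ 0 → r - J r ≤ 0) := by
  have h2δ : (0:ℝ) < 2 * δ := by linarith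
  intro r
  constructor
  · intro hr
    by_contra hlt
    push_neg at hlt
    have hrJ : r < J r := by linarith
    have hJpos : 0 < J r := by linarith
    have hne : J r ≠ 0 := ne_of_gt hJpos
    have ha : 0 ≤ r / J r := div_nonneg hr hJpos.le
    have ha1 : r / J r ≤ 1 := by
      rw [div_le_one hJpos]; linarith
    have hkey := hconv.2 (Set.mem_univ (J r)) (Set.mem_univ (0:ℝ)) ha
      (by linarith : 0 ≤ 1 - r / J r) (by ring)
    simp only [smul_eq_mul, mul_zero, add_zero, h0] at hkey
    rw [div_mul_cancel₀ r hne] at hkey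
    have hBr : B r ≤ B (J r) := by
      calc B r ≤ r / J r * B (J r) := by linarith
        _ ≤ 1 * B (J r) := by
            exact mul_le_mul_of_nonneg_right ha1 (hn (J r))
        _ = B (J r) := one_mul _
    have hineq := hJ r r
    have hsq : 0 < (r - J r) ^ 2 := by nlinarith
    have : (r - J r) ^ 2 / (2 * δ) > 0 := div_pos hsq h2δ
    have hrr : (r - r) ^ 2 / (2 * δ) = 0 := by simp
    rw [hrr] at hineq
    linarith
  · intro hr
    by_contra hlt
    push_neg at hlt
    have hrJ : J r < r := by linarith
    have hJneg : J r < 0 := by linarith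
    have hne : J r ≠ 0 := ne_of_lt hJneg
    have ha : 0 ≤ r / J r := by
      rw [div_nonneg_iff]; right; exact ⟨hr, hJneg.le⟩
    have ha1 : r / J r ≤ 1 := by
      rw [div_le_one_iff]; right; right; exact ⟨hJneg, hrJ.le⟩
    have hkey := hconv.2 (Set.mem_univ (J r)) (Set.mem_univ (0:ℝ)) ha
      (by linarith : 0 ≤ 1 - r / J r) (by ring)
    simp only [smul_eq_mul, mul_zero, add_zero, h0] at hkey
    rw [div_mul_cancel₀ r hne] at hkey
    have hBr : B r ≤ B (J r) := by
      calc B r ≤ r / J r * B (J r) := by linarith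
        _ ≤ 1 * B (J r) := mul_le_mul_of_nonneg_right ha1 (hn (J r))
        _ = B (J r) := one_mul _
    have hineq := hJ r r
    have hsq : 0 < (r - J r) ^ 2 := by nlinarith
    have : (r - J r) ^ 2 / (2 * δ) > 0 := div_pos hsq h2δ
    have hrr : (r - r) ^ 2 / (2 * δ) = 0 := by simp
    rw [hrr] at hineq
    linarith

/-- If the Yosida approximations satisfy `|β_ε(r)| ≤ ϱ|β_{Γ,ε}(r)| + c₀`, then
(using that they have the same sign) one has the lower bound
`β_{Γ,ε}(r)·β_ε(r) = |β_{Γ,ε}(r)|·|β_ε(r)| ≥ β_ε(r)²/(2ϱ) − c₀²/(2ϱ)`. -/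
theorem yosida_product_lower_bound
    (B BΓ : ℝ → ℝ) (hB : ConvexOn ℝ Set.univ B) (hBΓ : ConvexOn ℝ Set.univ BΓ)
    (hBnonneg : ∀ t : ℝ, 0 ≤ B t) (hBΓnonneg : ∀ t : ℝ, 0 ≤ BΓ t)
    (hB0 : B 0 = 0) (hBΓ0 : BΓ 0 = 0)
    (ϱ c₀ ε : ℝ) (hϱ : 0 < ϱ) (hc₀ : 0 < c₀) (hε : 0 < ε)
    (J JΓ : ℝ → ℝ)
    (hJ : ∀ r s : ℝ, (r - J r) ^ 2 / (2 * ε) + B (J r) ≤ (r - s) ^ 2 / (2 * ε) + B s)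
    (hJΓ : ∀ r s : ℝ,
      (r - JΓ r) ^ 2 / (2 * (ε * ϱ)) + BΓ (JΓ r) ≤ (r - s) ^ 2 / (2 * (ε * ϱ)) + BΓ s)
    (hdom : ∀ r : ℝ, |(r - J r) / ε| ≤ ϱ * |(r - JΓ r) / (ε * ϱ)| + c₀) :
    ∀ r : ℝ,
      (r - JΓ r) / (ε * ϱ) * ((r - J r) / ε)
          = |(r - JΓ r) / (ε * ϱ)| * |(r - J r) / ε| ∧
      1 / (2 * ϱ) * ((r - J r) / ε) ^ 2 - c₀ ^ 2 / (2 * ϱ)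
          ≤ (r - JΓ r) / (ε * ϱ) * ((r - J r) / ε) := by
  intro r
  have hεϱ : 0 < ε * ϱ := mul_pos hε hϱ
  have hs1 := yosida_sign_aux B hB hBnonneg hB0 ε hε J hJ r
  have hs2 := yosida_sign_aux BΓ hBΓ hBΓnonneg hBΓ0 (ε * ϱ) hεϱ JΓ hJΓ r
  set a := (r - JΓ r) / (ε * ϱ) with ha
  set b := (r - J r) / ε with hb
  have hab : 0 ≤ a * b := by
    rcases le_total 0 r with hr | hr
    · exact mul_nonneg (div_nonneg (hs2.1 hr) hεϱ.le) (div_nonneg (hs1.1 hr) hε.le)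
    · refine mul_nonneg_iff.mpr (Or.inr ⟨?_, ?_⟩)
      · exact div_nonpos_of_nonpos_of_nonneg (hs2.2 hr) hεϱ.le
      · exact div_nonpos_of_nonpos_of_nonneg (hs1.2 hr) hε.le
  have heq : a * b = |a| * |b| := by
    rw [← abs_mul, abs_of_nonneg hab]
  refine ⟨heq, ?_⟩
  have hd := hdom r
  rw [← hb, ← ha] at hd
  have hA : 0 ≤ |a| := abs_nonneg a
  have hB' : 0 ≤ |b| := abs_nonneg b
  have hbsq : b ^ 2 = |b| ^ 2 := (sq_abs b).symm
  rw [heq, hbsq]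
  have h2ϱ : (0:ℝ) < 2 * ϱ := by linarith
  have key : |b| ^ 2 - c₀ ^ 2 ≤ |a| * |b| * (2 * ϱ) := by
    nlinarith [sq_nonneg (|b| - c₀), mul_le_mul_of_nonneg_right hd hB']
  have h' : (|b| ^ 2 - c₀ ^ 2) / (2 * ϱ) ≤ |a| * |b| := (div_le_iff₀ h2ϱ).mpr key
  have heq2 : 1 / (2 * ϱ) * |b| ^ 2 - c₀ ^ 2 / (2 * ϱ) = (|b| ^ 2 - c₀ ^ 2) / (2 * ϱ) := by ring
  rw [heq2]; exact h'
end
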